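/- Let r > 0 and Ψ(x) = √(2x (Lx)^r). Then lim_{x→∞} Ψ⁻¹(x)(Lx)^r/x² = 2^{-(r+1)}, where Lx = log max(e, x). -/
import Mathlib


open Filter Set

theorem stmt_11 (r : ℝ) (hr : 0 < r)
    (L : ℝ → ℝ) (hL : ∀ x, L x = Real.log (max (Real.exp 1) x))
    (Ψ Ψinv : ℝ → ℝ) (hΨ : ∀ x, Ψ x = Real.sqrt (2 * x * (L x) ^ r))
    (hinv₁ : ∀ x ≥ (0 : ℝ), Ψinv (Ψ x) = x)
    (hinv₂ : ∀ y ≥ (0 : ℝ), Ψ (Ψinv y) = y) :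
    Tendsto (fun x => Ψinv x * (L x) ^ r / x ^ 2) atTop (nhds (2 ^ (-(r + 1)) : ℝ)) := by
  have hL1 : ∀ x : ℝ, 1 ≤ L x := by
    intro x
    rw [hL]
    calc (1:ℝ) = Real.log (Real.exp 1) := (Real.log_exp 1).symm
      _ ≤ _ := Real.log_le_log (Real.exp_pos 1) (le_max_left _ _)
  have hLpos : ∀ x, 0 < L x := fun x => lt_of_lt_of_le one_pos (hL1 x)
  have hLmono : ∀ a b : ℝ, a ≤ b → L a ≤ L b := by
    intro a b hab
    rw [hL, hL]
    exact Real.log_le_log (lt_of_lt_of_le (Real.exp_pos 1) (le_max_left _ _))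
      (max_le_max le_rfl hab)
  -- key identity
  have key : ∀ x : ℝ, 0 < x → x ^ 2 = 2 * Ψinv x * (L (Ψinv x)) ^ r ∧ 0 < Ψinv x := by
    intro x hx
    have h1 : Ψ (Ψinv x) = x := hinv₂ x hx.le
    rw [hΨ] at h1
    have ht : 0 < 2 * Ψinv x * (L (Ψinv x)) ^ r := by
      rw [← Real.sqrt_pos, h1]; exact hx
    constructor
    · have h2 := Real.sq_sqrt ht.le
      rw [h1] at h2
      exact h2
    · nlinarith [Real.rpow_pos_of_pos (hLpos (Ψinv x)) r]
  -- Ψ monotone on nonnegatives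
  have hΨmono : ∀ a b : ℝ, 0 ≤ a → a ≤ b → Ψ a ≤ Ψ b := by
    intro a b ha hab
    rw [hΨ, hΨ]
    apply Real.sqrt_le_sqrt
    have h1 : L a ≤ L b := hLmono a b hab
    have h2 : (L a) ^ r ≤ (L b) ^ r := Real.rpow_le_rpow (hLpos a).le h1 hr.le
    have h3 : (0:ℝ) ≤ (L a) ^ r := (Real.rpow_pos_of_pos (hLpos a) r).le
    nlinarith
  -- Ψinv tends to infinity
  have hutop : Tendsto Ψinv atTop atTop := by
    rw [tendsto_atTop]
    intro M
    filter_upwards [eventually_gt_atTop (max (Ψ (max M 0)) 0)] with x hx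
    have hx0 : 0 < x := lt_of_le_of_lt (le_max_right _ _) hx
    have hux : 0 < Ψinv x := (key x hx0).2
    by_contra h
    push_neg at h
    have h1 : Ψ (Ψinv x) ≤ Ψ (max M 0) :=
      hΨmono _ _ hux.le (le_trans h.le (le_max_left _ _))
    rw [hinv₂ x hx0.le] at h1
    exact absurd h1 (not_le.2 (lt_of_le_of_lt (le_max_left _ _) hx))
  -- numerator function
  set φ : ℝ → ℝ := fun v =>
    (Real.log 2 + Real.log v + r * Real.log (Real.log v)) / (2 * Real.log v) with hφdef
  -- eventual equality
  have heq : ∀ᶠ x in atTop, Ψinv x * (L x) ^ r / x ^ 2 = (1/2) * (φ (Ψinv x)) ^ r := by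
    filter_upwards [eventually_ge_atTop (Real.exp 1),
      hutop.eventually (eventually_ge_atTop (Real.exp 1))] with x hx hux
    have hx0 : (0:ℝ) < x := lt_of_lt_of_le (Real.exp_pos 1) hx
    obtain ⟨hkey, hu0⟩ := key x hx0
    have hLx : L x = Real.log x := by rw [hL, max_eq_right hx]
    have hLu : L (Ψinv x) = Real.log (Ψinv x) := by rw [hL, max_eq_right hux]
    have hlogx : 1 ≤ Real.log x := by
      calc (1:ℝ) = Real.log (Real.exp 1) := (Real.log_exp 1).symm
        _ ≤ _ := Real.log_le_log (Real.exp_pos 1) hx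
    have hlogu : 1 ≤ Real.log (Ψinv x) := by
      calc (1:ℝ) = Real.log (Real.exp 1) := (Real.log_exp 1).symm
        _ ≤ _ := Real.log_le_log (Real.exp_pos 1) hux
    have hlogu0 : 0 < Real.log (Ψinv x) := lt_of_lt_of_le one_pos hlogu
    have hrpow : (0:ℝ) < (Real.log (Ψinv x)) ^ r := Real.rpow_pos_of_pos hlogu0 r
    rw [hLu] at hkey
    -- log identity: 2 log x = log 2 + log u + r log log u
    have hlogkey : 2 * Real.log x =
        Real.log 2 + Real.log (Ψinv x) + r * Real.log (Real.log (Ψinv x)) := by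
      have h1 : Real.log (x ^ 2) = 2 * Real.log x := by
        rw [Real.log_pow]; push_cast; ring
      rw [← h1, hkey]
      rw [Real.log_mul (by positivity) hrpow.ne', Real.log_mul (by norm_num) hu0.ne',
        Real.log_rpow hlogu0]
    -- the ratio
    have hratio : φ (Ψinv x) = Real.log x / Real.log (Ψinv x) := by
      show (Real.log 2 + Real.log (Ψinv x) + r * Real.log (Real.log (Ψinv x))) /
          (2 * Real.log (Ψinv x)) = _
      rw [← hlogkey, mul_div_mul_left _ _ (by norm_num : (2:ℝ) ≠ 0)]
    rw [hLx, hkey, hratio,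
      Real.div_rpow (by linarith : (0:ℝ) ≤ Real.log x) hlogu0.le]
    field_simp
  -- limit of φ
  have hφlim : Tendsto φ atTop (nhds (1/2)) := by
    have hlog : Tendsto Real.log atTop atTop := Real.tendsto_log_atTop
    have t1 : Tendsto (fun v : ℝ => Real.log 2 / (2 * Real.log v)) atTop (nhds 0) :=
      tendsto_const_nhds.div_atTop (hlog.const_mul_atTop two_pos)
    have t3 : Tendsto (fun v : ℝ => Real.log (Real.log v) / Real.log v) atTop (nhds 0) :=
      (Real.isLittleO_log_id_atTop.tendsto_div_nhds_zero).comp hlog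
    have tsum : Tendsto (fun v : ℝ =>
        Real.log 2 / (2 * Real.log v) + 1/2 +
          (r/2) * (Real.log (Real.log v) / Real.log v)) atTop
        (nhds (0 + 1/2 + (r/2) * 0)) :=
      ((t1.add tendsto_const_nhds).add (t3.const_mul (r/2)))
    have : (0 : ℝ) + 1/2 + (r/2) * 0 = 1/2 := by ring
    rw [this] at tsum
    apply tsum.congr'
    filter_upwards [hlog.eventually (eventually_gt_atTop (0:ℝ))] with v hv
    rw [hφdef]
    field_simp
  -- conclude
  have hmain : Tendsto (fun x => (1/2 : ℝ) * (φ (Ψinv x)) ^ r) atTop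
      (nhds ((1/2) * ((1:ℝ)/2) ^ r)) :=
    ((hφlim.comp hutop).rpow_const (Or.inr hr.le)).const_mul _
  have hc : (2:ℝ) ^ (-(r+1)) = (1/2) * ((1:ℝ)/2) ^ r := by
    rw [show -(r+1) = (-1) + (-r) by ring, Real.rpow_add two_pos,
      Real.rpow_neg_one, one_div, Real.inv_rpow (by norm_num : (0:ℝ) ≤ 2),
      Real.rpow_neg (by norm_num : (0:ℝ) ≤ 2)]
  rw [hc]
  exact hmain.congr' (heq.mono fun x h => h.symm)
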